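/- arXiv:2201.07371 — 2 statements merged into one kernel-verified Lean document; each statement's English description precedes it below -/
import Mathlib

section
/- Let ρ : ℝ → ℝ be twice continuously differentiable and let w, p : ℝ → ℝ be differentiable functions. Set u(t) = w(t) − p(t) and define F(t) = ∫_0^{u(t)} ρ′(p(t) + ξ)·ξ dξ. Then F is differentiable and for every t one has the identity (d/dt)[ρ(w(t)) − ρ(p(t))] · u(t) = F′(t) + p′(t) · ∫_0^{u(t)} ρ″(p(t) + ξ)·(u(t) − ξ) dξ. -/
/-!
Integrating by parts, `F = u·ρ(w) − ∫_p^w ρ`, so `F` is differentiable with a derivative given by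
the chain rule and the fundamental theorem of calculus. Taylor's formula with integral remainder
turns `∫_0^u ρ″(p + ξ)(u − ξ) dξ` into `ρ(w) − ρ(p) − ρ′(p)·u`, after which the identity is a
ring identity.
-/

open intervalIntegral

theorem integral_deriv_comp_add_mul_self {g : ℝ → ℝ} (hg : ContDiff ℝ 1 g) (a u : ℝ) :
    ∫ ξ in (0:ℝ)..u, deriv g (a + ξ) * ξ = u * g (a + u) - ∫ x in a..a + u, g x := by
  have hshift (x : ℝ) : HasDerivAt (fun ξ => g (a + ξ)) (deriv g (a + x)) x :=
    ((hg.differentiable one_ne_zero) (a + x)).hasDerivAt.comp_const_add a x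
  have hparts := integral_mul_deriv_eq_deriv_mul (a := 0) (b := u)
    (fun x _ => hasDerivAt_id x) (fun x _ => hshift x)
    (intervalIntegrable_const (c := (1:ℝ)))
    (((hg.continuous_deriv le_rfl).comp (continuous_const_add a)).intervalIntegrable _ _)
  simp only [id, one_mul, zero_mul, sub_zero, integral_comp_add_left g, add_zero] at hparts
  simpa only [mul_comm] using hparts

theorem integral_deriv_comp_add {g : ℝ → ℝ} (hg : ContDiff ℝ 1 g) (a u : ℝ) :
    ∫ ξ in (0:ℝ)..u, deriv g (a + ξ) = g (a + u) - g a := by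
  rw [integral_comp_add_left (deriv g), add_zero]
  exact integral_deriv_eq_sub (fun x _ => hg.differentiable one_ne_zero x)
    ((hg.continuous_deriv le_rfl).intervalIntegrable _ _)

theorem integral_deriv_deriv_comp_add_mul_sub {f : ℝ → ℝ} (hf : ContDiff ℝ 2 f) (a u : ℝ) :
    ∫ ξ in (0:ℝ)..u, deriv (deriv f) (a + ξ) * (u - ξ) = f (a + u) - f a - deriv f a * u := by
  have hf' : ContDiff ℝ 1 (deriv f) := hf.deriv'
  have hf'' : Continuous fun ξ => deriv (deriv f) (a + ξ) :=
    (hf'.continuous_deriv le_rfl).comp (continuous_const_add a)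
  simp_rw [mul_sub]
  rw [integral_sub ((by fun_prop : Continuous _).intervalIntegrable _ _)
      ((by fun_prop : Continuous _).intervalIntegrable _ _),
    integral_mul_const, integral_deriv_comp_add hf', integral_deriv_comp_add_mul_self hf',
    integral_deriv_eq_sub (fun x _ => hf.differentiable two_ne_zero x)
      ((hf.continuous_deriv one_le_two).intervalIntegrable _ _)]
  ring

theorem hasDerivAt_intervalIntegral_comp_bounds {f a b : ℝ → ℝ} {a' b' t : ℝ} (hf : Continuous f)
    (ha : HasDerivAt a a' t) (hb : HasDerivAt b b' t) :
    HasDerivAt (fun s => ∫ x in a s..b s, f x) (f (b t) * b' - f (a t) * a') t := by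
  have hprim (x : ℝ) : HasDerivAt (fun y => ∫ z in (0:ℝ)..y, f z) (f x) x :=
    integral_hasDerivAt_right (hf.intervalIntegrable _ _) (hf.stronglyMeasurableAtFilter _ _)
      hf.continuousAt
  have hsplit : (fun s => ∫ x in a s..b s, f x)
      = fun s => (∫ x in (0:ℝ)..b s, f x) - ∫ x in (0:ℝ)..a s, f x := by
    funext s
    exact (integral_interval_sub_left (hf.intervalIntegrable _ _) (hf.intervalIntegrable _ _)).symm
  rw [hsplit]
  exact ((hprim (b t)).comp t hb).sub ((hprim (a t)).comp t ha)

/-- Wheeler-type differentiation identity: with `u = w − p` and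
`F(t) = ∫_0^{u(t)} ρ′(p(t) + ξ)·ξ dξ`, the function `F` is differentiable and
`(d/dt)[ρ(w) − ρ(p)]·u = F′ + p′·∫_0^{u} ρ″(p + ξ)·(u − ξ) dξ`. -/
theorem wheeler_differentiation_identity
    (ρ : ℝ → ℝ) (hρ : ContDiff ℝ 2 ρ)
    (w p : ℝ → ℝ) (hw : Differentiable ℝ w) (hp : Differentiable ℝ p)
    (u F : ℝ → ℝ)
    (hu : ∀ t, u t = w t - p t)
    (hF : ∀ t, F t = ∫ ξ in (0:ℝ)..(u t), deriv ρ (p t + ξ) * ξ) :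
    Differentiable ℝ F ∧
      ∀ t, deriv (fun s => ρ (w s) - ρ (p s)) t * u t =
        deriv F t +
          deriv p t * ∫ ξ in (0:ℝ)..(u t), deriv (deriv ρ) (p t + ξ) * (u t - ξ) := by
  have hρ' : Differentiable ℝ ρ := hρ.differentiable two_ne_zero
  have hcomp (v : ℝ → ℝ) (hv : Differentiable ℝ v) (t : ℝ) :
      HasDerivAt (fun s => ρ (v s)) (deriv ρ (v t) * deriv v t) t :=
    (hρ' (v t)).hasDerivAt.comp t (hv t).hasDerivAt
  have hF_eq : F = fun t => (w t - p t) * ρ (w t) - ∫ x in p t..w t, ρ x := by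
    funext t
    rw [hF, integral_deriv_comp_add_mul_self (hρ.of_le one_le_two), hu, add_sub_cancel]
  have hF' (t : ℝ) : HasDerivAt F ((deriv w t - deriv p t) * ρ (w t)
      + (w t - p t) * (deriv ρ (w t) * deriv w t)
      - (ρ (w t) * deriv w t - ρ (p t) * deriv p t)) t := by
    rw [hF_eq]
    exact (((hw t).hasDerivAt.sub (hp t).hasDerivAt).mul (hcomp w hw t)).sub
      (hasDerivAt_intervalIntegral_comp_bounds hρ'.continuous (hp t).hasDerivAt (hw t).hasDerivAt)
  refine ⟨fun t => (hF' t).differentiableAt, fun t => ?_⟩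
  have hlhs : HasDerivAt (fun s => ρ (w s) - ρ (p s)) _ t := (hcomp w hw t).sub (hcomp p hp t)
  rw [hlhs.deriv, (hF' t).deriv,
    integral_deriv_deriv_comp_add_mul_sub hρ, hu, add_sub_cancel]
  ring
end

section
/- Let (X, μ) be a measure space, let ρ(p) = ρ_ref · exp(c·(p − p_ref)) with constants ρ_ref > 0, c > 0, p_ref ∈ ℝ, and let φ > 0 be a constant. Let m ≤ M be real numbers and let f, g : X → ℝ be measurable functions with m ≤ f ≤ M and m ≤ g ≤ M μ-almost everywhere, and with f − g ∈ L²(μ). Then ∫_X φ·(ρ(f(x)) − ρ(g(x)))·(f(x) − g(x)) dμ(x) ≥ φ·c·ρ_ref·exp(c·(m − p_ref))·∫_X (f(x) − g(x))² dμ(x). -/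
/-!
The derivative `c ρ` of `ρ` is increasing, so on `[m, ∞)` it is at least `c ρ_ref exp (c (m − p_ref))` and on `(−∞, M]` at most `c ρ_ref exp (c (M − p_ref))`.
By the mean value theorem `(ρ u − ρ v)(u − v)` is squeezed between these constants times
`(u − v)²`; the upper bound makes the integrand integrable, and integrating the lower bound gives
the estimate.
-/

open MeasureTheory Set Real

namespace Convex

variable {D : Set ℝ} {f : ℝ → ℝ} {C x y : ℝ}

theorem mul_sq_le_image_sub_mul_sub (hD : Convex ℝ D) (hf : ContinuousOn f D)
    (hf' : DifferentiableOn ℝ f (interior D)) (hC : ∀ z ∈ interior D, C ≤ deriv f z)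
    (hx : x ∈ D) (hy : y ∈ D) : C * (x - y) ^ 2 ≤ (f x - f y) * (x - y) := by
  wlog hyx : y ≤ x generalizing x y
  · nlinarith [this hy hx (le_of_not_ge hyx)]
  have hslope := hD.mul_sub_le_image_sub_of_le_deriv hf hf' hC y hy x hx hyx
  nlinarith [mul_le_mul_of_nonneg_right hslope (sub_nonneg.2 hyx)]

theorem image_sub_mul_sub_le_mul_sq (hD : Convex ℝ D) (hf : ContinuousOn f D)
    (hf' : DifferentiableOn ℝ f (interior D)) (hC : ∀ z ∈ interior D, deriv f z ≤ C)
    (hx : x ∈ D) (hy : y ∈ D) : (f x - f y) * (x - y) ≤ C * (x - y) ^ 2 := by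
  wlog hyx : y ≤ x generalizing x y
  · nlinarith [this hy hx (le_of_not_ge hyx)]
  have hslope := hD.image_sub_le_mul_sub_of_deriv_le hf hf' hC y hy x hx hyx
  nlinarith [mul_le_mul_of_nonneg_right hslope (sub_nonneg.2 hyx)]

end Convex

section ExpDensity

variable {a c q u v : ℝ}

theorem hasDerivAt_const_mul_exp_mul_sub (a c q p : ℝ) :
    HasDerivAt (fun p => a * exp (c * (p - q))) (c * a * exp (c * (p - q))) p := by
  refine ((((hasDerivAt_id' p).sub_const q).const_mul c).exp.const_mul a).congr_deriv ?_
  ring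

theorem deriv_const_mul_exp_mul_sub (a c q p : ℝ) :
    deriv (fun p => a * exp (c * (p - q))) p = c * a * exp (c * (p - q)) :=
  (hasDerivAt_const_mul_exp_mul_sub a c q p).deriv

theorem mul_exp_mul_sq_le_const_mul_exp_sub_mul_sub (ha : 0 ≤ a) (hc : 0 ≤ c) {m : ℝ}
    (hu : m ≤ u) (hv : m ≤ v) :
    c * a * exp (c * (m - q)) * (u - v) ^ 2 ≤
      (a * exp (c * (u - q)) - a * exp (c * (v - q))) * (u - v) := by
  refine (convex_Ici m).mul_sq_le_image_sub_mul_sub (f := fun p => a * exp (c * (p - q)))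
    (by fun_prop) (by fun_prop) (fun z hz => ?_) hu hv
  rw [interior_Ici, mem_Ioi] at hz
  rw [deriv_const_mul_exp_mul_sub]
  gcongr

theorem const_mul_exp_sub_mul_sub_le_mul_exp_mul_sq (ha : 0 ≤ a) (hc : 0 ≤ c) {M : ℝ}
    (hu : u ≤ M) (hv : v ≤ M) :
    (a * exp (c * (u - q)) - a * exp (c * (v - q))) * (u - v) ≤
      c * a * exp (c * (M - q)) * (u - v) ^ 2 := by
  refine (convex_Iic M).image_sub_mul_sub_le_mul_sq (f := fun p => a * exp (c * (p - q)))
    (by fun_prop) (by fun_prop) (fun z hz => ?_) hu hv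
  rw [interior_Iic, mem_Iio] at hz
  rw [deriv_const_mul_exp_mul_sub]
  gcongr

end ExpDensity

theorem rho_L2_coercivity_general
    {X : Type*} [MeasurableSpace X] (μ : Measure X)
    (ρref c pref : ℝ) (hρref : 0 < ρref) (hc : 0 < c)
    (ρ : ℝ → ℝ) (hρ : ∀ p, ρ p = ρref * Real.exp (c * (p - pref)))
    (φ : ℝ) (hφ : 0 < φ)
    (m M : ℝ)
    (f g : X → ℝ) (hf : Measurable f) (hg : Measurable g)
    (hfbd : ∀ᵐ x ∂μ, f x ∈ Set.Icc m M) (hgbd : ∀ᵐ x ∂μ, g x ∈ Set.Icc m M)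
    (hfg : MemLp (f - g) 2 μ) :
    (∫ x, φ * (ρ (f x) - ρ (g x)) * (f x - g x) ∂μ) ≥
      φ * c * ρref * Real.exp (c * (m - pref)) * ∫ x, (f x - g x) ^ 2 ∂μ := by
  obtain rfl : ρ = fun p => ρref * exp (c * (p - pref)) := funext hρ
  have hsq : Integrable (fun x => (f x - g x) ^ 2) μ := hfg.integrable_sq
  have hlower : ∀ᵐ x ∂μ, φ * c * ρref * exp (c * (m - pref)) * (f x - g x) ^ 2 ≤
      φ * (ρref * exp (c * (f x - pref)) - ρref * exp (c * (g x - pref))) * (f x - g x) := by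
    filter_upwards [hfbd, hgbd] with x hfx hgx
    simpa only [mul_assoc] using mul_le_mul_of_nonneg_left
      (mul_exp_mul_sq_le_const_mul_exp_sub_mul_sub hρref.le hc.le hfx.1 hgx.1) hφ.le
  have hupper : ∀ᵐ x ∂μ,
      φ * (ρref * exp (c * (f x - pref)) - ρref * exp (c * (g x - pref))) * (f x - g x) ≤
        φ * c * ρref * exp (c * (M - pref)) * (f x - g x) ^ 2 := by
    filter_upwards [hfbd, hgbd] with x hfx hgx
    simpa only [mul_assoc] using mul_le_mul_of_nonneg_left
      (const_mul_exp_sub_mul_sub_le_mul_exp_mul_sq hρref.le hc.le hfx.2 hgx.2) hφ.le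
  have hint := integrable_of_le_of_le (by fun_prop) hlower hupper
    (hsq.const_mul _) (hsq.const_mul _)
  rw [ge_iff_le, ← integral_const_mul]
  exact integral_mono_ae (hsq.const_mul _) hint hlower

/-- L² coercivity estimate
`∫ φ·(ρ(f) − ρ(g))·(f − g) dμ ≥ φ·c·ρ_ref·exp(c·(m − p_ref))·∫ (f − g)² dμ`. -/
theorem rho_L2_coercivity
    {X : Type*} [MeasurableSpace X] (μ : Measure X)
    (ρref c pref : ℝ) (hρref : 0 < ρref) (hc : 0 < c)
    (ρ : ℝ → ℝ) (hρ : ∀ p, ρ p = ρref * Real.exp (c * (p - pref)))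
    (φ : ℝ) (hφ : 0 < φ)
    (m M : ℝ) (hmM : m ≤ M)
    (f g : X → ℝ) (hf : Measurable f) (hg : Measurable g)
    (hfbd : ∀ᵐ x ∂μ, f x ∈ Set.Icc m M) (hgbd : ∀ᵐ x ∂μ, g x ∈ Set.Icc m M)
    (hfg : MemLp (f - g) 2 μ) :
    (∫ x, φ * (ρ (f x) - ρ (g x)) * (f x - g x) ∂μ) ≥
      φ * c * ρref * Real.exp (c * (m - pref)) * ∫ x, (f x - g x) ^ 2 ∂μ :=
  rho_L2_coercivity_general μ ρref c pref hρref hc ρ hρ φ hφ m M f g hf hg hfbd hgbd hfg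
end
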